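/- Let G, H be independent G(n,p) graphs and Zk the number of k-cliques in G × H. With k* = (2 + a_n) log_{1/p} n where a_n = (log_{1/p} log n)/(log_{1/p} n), the probability P(Z_{k*} > 0) tends to 0 as n → ∞. -/

import Mathlib

open MeasureTheory ProbabilityTheory Filter

noncomputable section

abbrev EdgeSlot (n : ℕ) := {s : Sym2 (Fin n) // ¬ s.IsDiag}

abbrev ERSpace (n : ℕ) := EdgeSlot n → Bool

/-- The Erdős–Rényi measure: each potential edge present independently with prob `p`. -/
def erMeasure (n : ℕ) (p : ℝ) : Measure (ERSpace n) :=
  Measure.pi fun _ => (PMF.bernoulli (min (Real.toNNReal p) 1) (min_le_right _ _)).toMeasure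

def edgeSlot {n : ℕ} {u v : Fin n} (h : u ≠ v) : EdgeSlot n :=
  ⟨s(u, v), by simpa using h⟩

/-- The graph associated to an outcome of edge indicators. -/
def erGraph {n : ℕ} (ω : ERSpace n) : SimpleGraph (Fin n) where
  Adj u v := ∃ h : u ≠ v, ω (edgeSlot h) = true
  symm := ⟨by
    rintro u v ⟨h, hw⟩
    refine ⟨h.symm, ?_⟩
    have he : edgeSlot h.symm = edgeSlot h := Subtype.ext (Sym2.eq_swap)
    rw [he]; exact hw⟩
  loopless := ⟨by rintro u ⟨h, -⟩; exact h rfl⟩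

/-- Number of `k`-cliques in a graph on a finite vertex set. -/
def cliqueCount {V : Type*} [Fintype V] (G : SimpleGraph V) (k : ℕ) : ℕ :=
  Set.ncard {s : Finset V | G.IsNClique k s}

/-- The tensor (categorical) product of two simple graphs. -/
def tensorProd {α β : Type*} (G : SimpleGraph α) (H : SimpleGraph β) :
    SimpleGraph (α × β) where
  Adj x y := G.Adj x.1 y.1 ∧ H.Adj x.2 y.2
  symm := ⟨fun _ _ ⟨h1, h2⟩ => ⟨h1.symm, h2.symm⟩⟩
  loopless := ⟨fun x h => G.loopless.irrefl x.1 h.1⟩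

instance {α β : Type*} (G : SimpleGraph α) (H : SimpleGraph β)
    [DecidableRel G.Adj] [DecidableRel H.Adj] : DecidableRel (tensorProd G H).Adj :=
  fun _ _ => inferInstanceAs (Decidable (_ ∧ _))

/-- Number of `k`-cliques contained in the open neighborhood of `w`. -/
def nbhdCliqueCount {V : Type*} [Fintype V] (G : SimpleGraph V) (k : ℕ) (w : V) : ℕ :=
  Set.ncard {s : Finset V | G.IsNClique k s ∧ ∀ x ∈ s, G.Adj w x}

/-- Number of isolated vertices. -/
def isolatedCount {V : Type*} [Fintype V] (K : SimpleGraph V) : ℕ :=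
  Set.ncard {v : V | ∀ w, ¬ K.Adj v w}

end

/-! A `k`-clique of `G × H` projects injectively onto a `k`-clique of `G`, so by the union
bound over `k`-sets the probability is at most `C(n,k) p^C(k,2) ≤ (n p^((k-1)/2))^k`. Once
`k ≥ 2 log_{1/p} n + 2` this is at most `p^(k/2)`, which tends to `0` because `k → ∞`. -/

open Finset Real

instance (n : ℕ) (p : ℝ) : IsProbabilityMeasure (erMeasure n p) := by
  unfold erMeasure; infer_instance

theorem erMeasure_forall_eq_true (n : ℕ) {p : ℝ} (hp : p ≤ 1) (E : Finset (EdgeSlot n)) :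
    erMeasure n p {ω | ∀ e ∈ E, ω e = true} = ENNReal.ofReal p ^ #E := by
  have hset : {ω : ERSpace n | ∀ e ∈ E, ω e = true}
      = (E : Set (EdgeSlot n)).pi fun _ => {true} := by
    ext; simp
  have hmin : min p.toNNReal 1 = p.toNNReal := min_eq_left (toNNReal_le_one.2 hp)
  rw [erMeasure, hset, Measure.pi_pi_finset, prod_const,
    PMF.toMeasure_apply_singleton _ _ (measurableSet_singleton _)]
  exact congrArg (fun q : NNReal => (q : ENNReal) ^ #E) hmin

def cliqueSlots {n : ℕ} (s : Finset (Fin n)) : Finset (EdgeSlot n) :=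
  (s.offDiag.image Sym2.mk.uncurry).subtype fun e => ¬ e.IsDiag

theorem card_cliqueSlots {n : ℕ} (s : Finset (Fin n)) : #(cliqueSlots s) = (#s).choose 2 := by
  rw [cliqueSlots, card_subtype, filter_true_of_mem, Sym2.card_image_offDiag]
  simp only [mem_image, mem_offDiag]
  rintro _ ⟨⟨a, b⟩, ⟨-, -, hab⟩, rfl⟩
  simpa using hab

theorem forall_cliqueSlots_eq_true_of_isClique {n : ℕ} {ω : ERSpace n} {s : Finset (Fin n)}
    (hs : (erGraph ω).IsClique (s : Set (Fin n))) : ∀ e ∈ cliqueSlots s, ω e = true := by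
  rintro ⟨e, he⟩ hmem
  simp only [cliqueSlots, mem_subtype, mem_image, mem_offDiag] at hmem
  obtain ⟨⟨a, b⟩, ⟨ha, hb, hab⟩, rfl⟩ := hmem
  exact (hs ha hb hab).2

theorem erMeasure_isNClique_le (n : ℕ) {p : ℝ} (hp : p ≤ 1) {k : ℕ} (s : Finset (Fin n)) :
    erMeasure n p {ω | (erGraph ω).IsNClique k s} ≤ ENNReal.ofReal p ^ k.choose 2 := by
  by_cases hs : #s = k
  · calc erMeasure n p {ω | (erGraph ω).IsNClique k s}
        ≤ erMeasure n p {ω | ∀ e ∈ cliqueSlots s, ω e = true} :=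
          measure_mono fun ω hω => forall_cliqueSlots_eq_true_of_isClique hω.isClique
      _ = ENNReal.ofReal p ^ k.choose 2 := by
          rw [erMeasure_forall_eq_true n hp, card_cliqueSlots, hs]
  · have hempty : {ω : ERSpace n | (erGraph ω).IsNClique k s} = ∅ :=
      Set.eq_empty_of_forall_notMem fun ω hω => hs hω.card_eq
    simp [hempty]

theorem erMeasure_exists_isNClique_le (n : ℕ) {p : ℝ} (hp : p ≤ 1) (k : ℕ) :
    erMeasure n p {ω | ∃ s, (erGraph ω).IsNClique k s}
      ≤ n.choose k * ENNReal.ofReal p ^ k.choose 2 := by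
  have hcover : {ω : ERSpace n | ∃ s, (erGraph ω).IsNClique k s}
      ⊆ ⋃ s ∈ univ.powersetCard k, {ω | (erGraph ω).IsNClique k s} := by
    rintro ω ⟨s, hs⟩
    exact Set.mem_biUnion (mem_powersetCard_univ.2 hs.card_eq) hs
  calc erMeasure n p {ω | ∃ s, (erGraph ω).IsNClique k s}
      ≤ ∑ s ∈ univ.powersetCard k, erMeasure n p {ω | (erGraph ω).IsNClique k s} :=
        (measure_mono hcover).trans (measure_biUnion_finset_le _ _)
    _ ≤ ∑ _s ∈ univ.powersetCard k, ENNReal.ofReal p ^ k.choose 2 :=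
        sum_le_sum fun s _ => erMeasure_isNClique_le n hp s
    _ = n.choose k * ENNReal.ofReal p ^ k.choose 2 := by
        simp

namespace SimpleGraph

variable {α β : Type*} {G : SimpleGraph α} {G' : SimpleGraph β}

/-- Adjacent vertices have distinct images under a homomorphism, so `f` is injective on `s`. -/
theorem IsNClique.image_hom [DecidableEq β] (f : G →g G') {k : ℕ} {s : Finset α}
    (hs : G.IsNClique k s) : G'.IsNClique k (s.image f) := by
  have hinj : Set.InjOn f s := fun x hx y hy hfxy => by
    by_contra hxy
    exact G'.ne_of_adj (f.map_adj (hs.isClique hx hy hxy)) hfxy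
  refine ⟨?_, by rw [card_image_of_injOn hinj, hs.card_eq]⟩
  rintro _ hx _ hy hne
  simp only [coe_image, Set.mem_image, mem_coe] at hx hy
  obtain ⟨x, hx, rfl⟩ := hx
  obtain ⟨y, hy, rfl⟩ := hy
  exact f.map_adj (hs.isClique hx hy fun h => hne (h ▸ rfl))

end SimpleGraph

theorem cliqueCount_pos_iff {α : Type*} [Fintype α] {G : SimpleGraph α} {k : ℕ} :
    0 < cliqueCount G k ↔ ∃ s, G.IsNClique k s :=
  Set.ncard_pos (Set.toFinite _)

def tensorProdFst {α β : Type*} (G : SimpleGraph α) (H : SimpleGraph β) :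
    tensorProd G H →g G where
  toFun := Prod.fst
  map_rel' h := h.1

theorem prod_erMeasure_cliqueCount_tensorProd_pos_le (n : ℕ) {p : ℝ} (hp0 : 0 ≤ p)
    (hp1 : p ≤ 1) (k : ℕ) :
    (((erMeasure n p).prod (erMeasure n p))
      {ω | 0 < cliqueCount (tensorProd (erGraph ω.1) (erGraph ω.2)) k}).toReal
      ≤ n.choose k * p ^ k.choose 2 := by
  classical
  have hproj : {ω : ERSpace n × ERSpace n |
        0 < cliqueCount (tensorProd (erGraph ω.1) (erGraph ω.2)) k}
      ⊆ {ω | ∃ s, (erGraph ω).IsNClique k s} ×ˢ Set.univ := by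
    intro ω hω
    obtain ⟨s, hs⟩ := cliqueCount_pos_iff.1 hω
    exact ⟨⟨_, hs.image_hom (tensorProdFst _ _)⟩, trivial⟩
  have hbound : ((erMeasure n p).prod (erMeasure n p))
      {ω | 0 < cliqueCount (tensorProd (erGraph ω.1) (erGraph ω.2)) k}
      ≤ n.choose k * ENNReal.ofReal p ^ k.choose 2 := by
    refine (measure_mono hproj).trans ?_
    rw [Measure.prod_prod, measure_univ, mul_one]
    exact erMeasure_exists_isNClique_le n hp1 k
  have hfinite : (n.choose k : ENNReal) * ENNReal.ofReal p ^ k.choose 2 ≠ ⊤ := by finiteness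
  simpa [ENNReal.toReal_ofReal hp0] using ENNReal.toReal_mono hfinite hbound

theorem choose_mul_pow_choose_two_le_sqrt_pow {p : ℝ} (hp0 : 0 < p) (hp1 : p < 1) {n k : ℕ}
    (hn : 0 < n) (hk : 2 * logb (1 / p) n + 2 ≤ k) :
    (n.choose k : ℝ) * p ^ k.choose 2 ≤ √p ^ k := by
  have hL : 0 < log (1 / p) := log_pos (one_lt_one_div hp0 hp1)
  have hlog_n : 2 * log n ≤ (k - 2) * log (1 / p) := by
    rwa [logb, mul_div_assoc', ← le_sub_iff_add_le, div_le_iff₀ hL] at hk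
  have hnk : (0 : ℝ) < (n : ℝ) ^ k := by positivity
  calc (n.choose k : ℝ) * p ^ k.choose 2
      ≤ (n : ℝ) ^ k * p ^ k.choose 2 := by gcongr; exact_mod_cast n.choose_le_pow k
    _ ≤ √p ^ k := by
      -- in logarithms the claim reads `k * (log n - (k - 2) / 2 * log (1 / p)) ≤ 0`
      rw [← log_le_log_iff (by positivity) (by positivity), log_mul hnk.ne' (by positivity),
        log_pow, log_pow, log_pow, log_sqrt hp0.le, Nat.cast_choose_two]
      rw [one_div, log_inv] at hL hlog_n
      nlinarith [mul_le_mul_of_nonneg_left hlog_n (k.cast_nonneg : (0 : ℝ) ≤ k)]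

theorem eventually_two_logb_add_two_le_floor {b : ℝ} (hb : 1 < b) :
    ∀ᶠ n : ℕ in atTop, 2 * logb b n + 2 ≤ ⌊2 * logb b n + logb b (logb 2 n)⌋₊ := by
  have hloglog : Tendsto (fun n : ℕ => logb b (logb 2 n)) atTop atTop :=
    (tendsto_logb_atTop hb).comp <|
      (tendsto_logb_atTop one_lt_two).comp tendsto_natCast_atTop_atTop
  filter_upwards [hloglog.eventually_ge_atTop 3] with n hn
  linarith [Nat.sub_one_lt_floor (2 * logb b n + logb b (logb 2 n))]

theorem prob_large_clique_tendsto_zero (p : ℝ) (hp : p ∈ Set.Ioo (0 : ℝ) 1) :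
    Filter.Tendsto
      (fun n : ℕ =>
        (((erMeasure n p).prod (erMeasure n p))
          {ω | 0 < cliqueCount (tensorProd (erGraph ω.1) (erGraph ω.2))
            ⌊2 * Real.logb (1 / p) n + Real.logb (1 / p) (Real.logb 2 n)⌋₊}).toReal)
      Filter.atTop (nhds 0) := by
  obtain ⟨hp0, hp1⟩ := hp
  have hb : 1 < 1 / p := one_lt_one_div hp0 hp1
  set k : ℕ → ℕ := fun n => ⌊2 * logb (1 / p) n + logb (1 / p) (logb 2 n)⌋₊
  have hk : ∀ᶠ n : ℕ in atTop, 2 * logb (1 / p) n + 2 ≤ k n :=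
    eventually_two_logb_add_two_le_floor hb
  have hk_top : Tendsto k atTop atTop := by
    refine tendsto_natCast_atTop_iff.1 (tendsto_atTop_mono' _ hk ?_)
    exact tendsto_atTop_add_const_right _ 2 <|
      ((tendsto_logb_atTop hb).comp tendsto_natCast_atTop_atTop).const_mul_atTop two_pos
  have hsqrt : √p < 1 := (sqrt_lt' one_pos).2 (by simpa using hp1)
  have hsqrt_pow : Tendsto (fun n => √p ^ k n) atTop (nhds 0) :=
    (tendsto_pow_atTop_nhds_zero_of_lt_one (sqrt_nonneg p) hsqrt).comp hk_top
  refine squeeze_zero' (.of_forall fun _ => ENNReal.toReal_nonneg) ?_ hsqrt_pow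
  filter_upwards [hk, eventually_gt_atTop 0] with n hkn hn
  exact (prod_erMeasure_cliqueCount_tensorProd_pos_le n hp0.le hp1.le (k n)).trans
    (choose_mul_pow_choose_two_le_sqrt_pow hp0 hp1 hn hkn)
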